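/- Let n ≥ 1 and let A_n be Huang's matrix defined by A_1 = [[0,1],[1,0]], A_n = [[A_{n−1}, I],[I, −A_{n−1}]]. Then A_n² = n·I, and consequently the eigenvalues of A_n are ±√n, each with multiplicity 2^(n−1). -/

import Mathlib

open scoped BigOperators

/-- Huang's matrix sequence: `A 0` is the `1×1` zero matrix, and
`A (n+1) = [[A n, I], [I, -A n]]` in block form (so `A 1 = [[0,1],[1,0]]`). -/
noncomputable def A : (n : ℕ) → Matrix (Fin (2 ^ n)) (Fin (2 ^ n)) ℝ
  | 0 => 0
  | (n + 1) =>
    Matrix.reindex (finSumFinEquiv.trans (finCongr (by rw [pow_succ]; ring)))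
      (finSumFinEquiv.trans (finCongr (by rw [pow_succ]; ring)))
      (Matrix.fromBlocks (A n) 1 1 (-(A n)))


lemma A_sq (n : ℕ) : A n ^ 2 = (n : ℝ) • (1 : Matrix (Fin (2 ^ n)) (Fin (2 ^ n)) ℝ) := by
  induction n with
  | zero => simp [A]
  | succ n ih =>
    rw [A, pow_two, Matrix.reindex_apply, Matrix.submatrix_mul_equiv,
      Matrix.fromBlocks_multiply]
    have h1 : A n * A n + 1 * 1 = ((n : ℝ) + 1) • 1 := by
      rw [← pow_two, ih]; simp [add_smul]
    have h2 : 1 * 1 + -A n * -A n = ((n : ℝ) + 1) • 1 := by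
      rw [Matrix.neg_mul, Matrix.mul_neg, neg_neg, Matrix.one_mul, ← pow_two, ih]
      simp [add_smul]; abel
    rw [h1, h2]
    simp only [Matrix.mul_one, Matrix.one_mul, Matrix.neg_mul, Matrix.mul_neg,
      add_neg_cancel, neg_add_cancel]
    rw [show (Matrix.fromBlocks (((n : ℝ) + 1) • 1) 0 0 (((n : ℝ) + 1) • 1)
        : Matrix (Fin (2^n) ⊕ Fin (2^n)) _ ℝ) = ((n : ℝ) + 1) • 1 by
      rw [← Matrix.fromBlocks_one]; ext i j; cases i <;> cases j <;>
        simp [Matrix.fromBlocks]]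
    simp only [Matrix.submatrix_smul, Pi.smul_apply, Matrix.submatrix_one_equiv]
    push_cast; rfl

lemma trace_submatrix_equiv {m n R : Type*} [Fintype m] [Fintype n] [AddCommMonoid R]
    (e : m ≃ n) (M : Matrix n n R) : (M.submatrix e e).trace = M.trace := by
  simp only [Matrix.trace, Matrix.diag, Matrix.submatrix_apply]
  exact e.sum_comp fun i => M i i

lemma A_trace (n : ℕ) : Matrix.trace (A n) = 0 := by
  induction n with
  | zero => simp [A]
  | succ n ih =>
    rw [A, Matrix.reindex_apply]
    rw [trace_submatrix_equiv]
    simp [Matrix.trace, Matrix.diag, Matrix.fromBlocks]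

/-- `A n ² = n·I`, and consequently the eigenvalues of `A n` are exactly `±√n`, each with
multiplicity `2^(n-1)`. -/
theorem huang_matrix_sq_and_eigenvalues (n : ℕ) (hn : 1 ≤ n) :
    A n ^ 2 = (n : ℝ) • (1 : Matrix (Fin (2 ^ n)) (Fin (2 ^ n)) ℝ) ∧
    (∀ μ : ℝ, Module.End.HasEigenvalue (Matrix.toLin' (A n)) μ ↔
      μ = Real.sqrt n ∨ μ = -Real.sqrt n) ∧
    Module.finrank ℝ (Module.End.eigenspace (Matrix.toLin' (A n)) (Real.sqrt n))
      = 2 ^ (n - 1) ∧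
    Module.finrank ℝ (Module.End.eigenspace (Matrix.toLin' (A n)) (-Real.sqrt n))
      = 2 ^ (n - 1) := by
  set s := Real.sqrt n with hs
  have hs2 : s * s = (n : ℝ) := Real.mul_self_sqrt (by positivity)
  have hs0 : 0 < s := Real.sqrt_pos.mpr (by exact_mod_cast hn)
  set f : Module.End ℝ (Fin (2 ^ n) → ℝ) := Matrix.toLin' (A n) with hfdef
  -- f ∘ f = n • id
  have hff : ∀ x, f (f x) = (n : ℝ) • x := by
    intro x
    rw [hfdef, ← Matrix.toLin'_mul_apply, ← pow_two, A_sq]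
    simp
  set P : Module.End ℝ (Fin (2 ^ n) → ℝ) :=
    (2 * s)⁻¹ • (f + s • (LinearMap.id : Module.End ℝ (Fin (2 ^ n) → ℝ))) with hPdef
  have hPapp : ∀ x, P x = (2 * s)⁻¹ • (f x + s • x) := by
    intro x; simp [hPdef]
  have h2s : (2 * s) ≠ 0 := by positivity
  -- if f x = s • x then P x = x
  have hfix : ∀ x, f x = s • x → P x = x := by
    intro x hx
    rw [hPapp, hx, ← add_smul, smul_smul]
    have : (2 * s)⁻¹ * (s + s) = 1 := by field_simp; ring
    rw [this, one_smul]
  -- f (P x) = s • P x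
  have hfP : ∀ x, f (P x) = s • P x := by
    intro x
    rw [hPapp, map_smul, map_add, map_smul, hff, ← hs2]
    match_scalars <;> ring
  -- eigenspace s = range P
  have hrange : Module.End.eigenspace f s = LinearMap.range P := by
    ext x
    rw [Module.End.mem_eigenspace_iff]
    constructor
    · intro hx; exact ⟨x, hfix x hx⟩
    · rintro ⟨y, rfl⟩; exact hfP y
  -- eigenspace (-s) = ker P
  have hker : Module.End.eigenspace f (-s) = LinearMap.ker P := by
    ext x
    rw [Module.End.mem_eigenspace_iff, LinearMap.mem_ker, hPapp, smul_eq_zero,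
      or_iff_right (inv_ne_zero h2s)]
    constructor
    · intro hx; rw [hx]; simp
    · intro hx
      have : f x = -(s • x) := by linear_combination (norm := module) hx
      rw [this, neg_smul]
  have hproj : LinearMap.IsProj (LinearMap.range P) P := by
    constructor
    · intro x; exact LinearMap.mem_range_self P x
    · rintro x ⟨y, rfl⟩
      exact hfix _ (hfP y)
  -- trace computations
  have htrf : LinearMap.trace ℝ _ f = 0 := by
    rw [hfdef, LinearMap.trace_eq_matrix_trace ℝ (Pi.basisFun ℝ (Fin (2 ^ n))),
      LinearMap.toMatrix_eq_toMatrix', LinearMap.toMatrix'_toLin', A_trace]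
  have hdim : Module.finrank ℝ (Fin (2 ^ n) → ℝ) = 2 ^ n := by
    simp
  have h2pow : (2 : ℝ) ^ n = 2 * 2 ^ (n - 1) := by
    rw [← pow_succ']; congr 1; omega
  have htrP : LinearMap.trace ℝ _ P = (2 : ℝ) ^ (n - 1) := by
    rw [hPdef, map_smul, map_add, map_smul, htrf, LinearMap.trace_id, hdim]
    push_cast
    rw [h2pow]
    field_simp
    rw [smul_eq_mul, smul_eq_mul, zero_add,
      show 1 / (2 * s) * (s * (2 * 2 ^ (n - 1))) = (s⁻¹ * s) * (2⁻¹ * 2) * (2 : ℝ) ^ (n - 1) by ring,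
      inv_mul_cancel₀ hs0.ne']
    norm_num
  have hrk : Module.finrank ℝ (LinearMap.range P) = 2 ^ (n - 1) := by
    have := hproj.trace
    rw [htrP] at this
    have : ((Module.finrank ℝ (LinearMap.range P) : ℝ)) = ((2 ^ (n - 1) : ℕ) : ℝ) := by
      rw [← this]; push_cast; ring
    exact_mod_cast this
  have hnull : Module.finrank ℝ (LinearMap.ker P) = 2 ^ (n - 1) := by
    have hrn := LinearMap.finrank_range_add_finrank_ker P
    rw [hdim, hrk] at hrn
    have : 2 ^ n = 2 ^ (n - 1) + 2 ^ (n - 1) := by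
      rw [← two_mul, ← pow_succ']; congr 1; omega
    omega
  refine ⟨A_sq n, ?_, by rw [hrange]; exact hrk, by rw [hker]; exact hnull⟩
  intro μ
  constructor
  · intro hμ
    obtain ⟨v, hv⟩ := hμ.exists_hasEigenvector
    have h1 : (μ * μ) • v = (n : ℝ) • v := by
      rw [← hff v, hv.apply_eq_smul, map_smul, hv.apply_eq_smul, smul_smul]
    have h2 : μ * μ = (n : ℝ) := by
      by_contra h
      have h0 : (μ * μ - (n : ℝ)) • v = 0 := by rw [sub_smul, h1, sub_self]
      exact hv.2 ((smul_eq_zero.mp h0).resolve_left (sub_ne_zero.mpr h))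
    have h3 : (μ - s) * (μ + s) = 0 := by nlinarith [hs2, h2]
    rcases mul_eq_zero.mp h3 with h | h
    · exact Or.inl (by linarith)
    · exact Or.inr (by linarith)
  · rintro (rfl | rfl)
    · apply Module.End.hasEigenvalue_iff.mpr
      intro hbot
      rw [hrange] at hbot
      rw [hbot, finrank_bot] at hrk
      exact (pow_ne_zero _ two_ne_zero) hrk.symm
    · apply Module.End.hasEigenvalue_iff.mpr
      intro hbot
      rw [hker] at hbot
      rw [hbot, finrank_bot] at hnull
      exact (pow_ne_zero _ two_ne_zero) hnull.symm
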